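/- If C ⊂ ℝ is a Cantor set with thickness τ(C), then its Hausdorff dimension satisfies dim_H C ≥ log 2 / log(2 + 1/τ(C)). -/

import Mathlib

open Set ENNReal

/-- A Cantor set in ℝ: nonempty, compact, perfect, totally disconnected. -/
def IsCantorSet (C : Set ℝ) : Prop :=
  C.Nonempty ∧ IsCompact C ∧ Perfect C ∧ IsTotallyDisconnected C

/-- The convex hull of a compact set of reals. -/
noncomputable def cHull (C : Set ℝ) : Set ℝ := Set.Icc (sInf C) (sSup C)

/-- `U` is a gap of `C`: a connected component of (convex hull of C) \ C. -/
def IsGap (C U : Set ℝ) : Prop :=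
  ∃ x ∈ cHull C \ C, U = connectedComponentIn (cHull C \ C) x

/-- A presentation of `C`: an ordering of the gaps of `C`. -/
def IsPresentation (C : Set ℝ) (U : ℕ → Set ℝ) : Prop :=
  (∀ n, IsGap C (U n)) ∧ Function.Injective U ∧ ∀ G, IsGap C G → ∃ n, U n = G

/-- The bridge `K`: the connected component of the hull minus the first `n+1` gaps
containing the point `u`. -/
noncomputable def bridge (C : Set ℝ) (U : ℕ → Set ℝ) (n : ℕ) (u : ℝ) : Set ℝ :=
  connectedComponentIn (cHull C \ ⋃ i ∈ Finset.range (n + 1), U i) u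

/-- The ratio τ(C, 𝒰, u) = |K|/|Uₙ|. -/
noncomputable def gapRatio (C : Set ℝ) (U : ℕ → Set ℝ) (n : ℕ) (u : ℝ) : ℝ≥0∞ :=
  ENNReal.ofReal (Metric.diam (bridge C U n u)) / ENNReal.ofReal (Metric.diam (U n))

/-- The thickness τ(C) = sup over presentations of inf over gap boundary points of the ratio. -/
noncomputable def thickness (C : Set ℝ) : ℝ≥0∞ :=
  ⨆ (U : ℕ → Set ℝ) (_ : IsPresentation C U),
    ⨅ (n : ℕ) (u : ℝ) (_ : u ∈ frontier (U n) ∩ C), gapRatio C U n u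

/-- The denseness θ(C) = inf over presentations of sup over gap boundary points of the ratio. -/
noncomputable def denseness (C : Set ℝ) : ℝ≥0∞ :=
  ⨅ (U : ℕ → Set ℝ) (_ : IsPresentation C U),
    ⨆ (n : ℕ) (u : ℝ) (_ : u ∈ frontier (U n) ∩ C), gapRatio C U n u

/-!
Fix `t` below the thickness, a presentation all of whose gap ratios exceed `t`, and `0 < s` with
`(2 + 1 / t) ^ s ≤ 2`. Every finite cover of `C` by disjoint open intervals `I` has
`∑ |I| ^ s ≥ |hull C| ^ s`: if no single interval covers `[a, b]`, the gap `(c, d)` of smallest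
index that the cover splits has bridges `[a, c]` and `[d, b]` of length at least `t (d - c)`; for
such lengths concavity of `x ↦ x ^ s` gives `(A + (d - c) + B) ^ s ≤ A ^ s + B ^ s`, and one
recurses on both sides. Overlapping intervals merge at no extra cost, and by compactness the
Hausdorff measure only needs finite open covers, so `μH[s] C > 0` and `dimH C ≥ s`.
-/

open MeasureTheory

theorem ConcaveOn.map_add_sub_map_le {s : Set ℝ} {f : ℝ → ℝ} (hf : ConcaveOn ℝ s f)
    {u v d : ℝ} (hu : u ∈ s) (hvd : v + d ∈ s) (huv : u ≤ v) (hd : 0 ≤ d) :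
    f (v + d) - f v ≤ f (u + d) - f u := by
  rcases (add_nonneg (sub_nonneg.2 huv) hd).eq_or_lt with hL | hL
  · obtain rfl : d = 0 := by linarith
    obtain rfl : u = v := by linarith
    rfl
  -- `u + d` and `v` are the convex combinations of `u` and `v + d` with swapped weights.
  set L := v - u + d
  have hw : 0 ≤ d / L := div_nonneg hd hL.le
  have hw' : 0 ≤ (v - u) / L := div_nonneg (sub_nonneg.2 huv) hL.le
  have hsum : (v - u) / L + d / L = 1 := by field_simp; ring
  have h1 := hf.2 hu hvd hw' hw hsum
  have h2 := hf.2 hu hvd hw hw' (by linarith)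
  have e1 : (v - u) / L * u + d / L * (v + d) = u + d := by field_simp; ring
  have e2 : d / L * u + (v - u) / L * (v + d) = v := by field_simp; ring
  simp only [smul_eq_mul, e1, e2] at h1 h2
  linear_combination h1 + h2 - (f u + f (v + d)) * hsum

theorem le_one_of_two_add_inv_rpow_le {t s : ℝ} (ht : 0 < t) (hst : (2 + 1 / t) ^ s ≤ 2) :
    s ≤ 1 := by
  have hb : 2 < 2 + 1 / t := by have := one_div_pos.2 ht; linarith
  refine ((Real.rpow_lt_rpow_left_iff (by linarith)).1 (hst.trans_lt ?_)).le
  rwa [Real.rpow_one]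

theorem rpow_add_add_le_of_two_add_inv_rpow_le {t s A g B : ℝ} (ht : 0 < t) (hs0 : 0 ≤ s)
    (hst : (2 + 1 / t) ^ s ≤ 2) (hg : 0 ≤ g) (hA : t * g ≤ A) (hB : t * g ≤ B) :
    (A + g + B) ^ s ≤ A ^ s + B ^ s := by
  wlog hAB : A ≤ B generalizing A B
  · have := this hB hA (le_of_not_ge hAB)
    rwa [add_comm, add_comm B, add_comm (B ^ s), ← add_assoc] at this
  have hs1 := le_one_of_two_add_inv_rpow_le ht hst
  have hA0 : 0 ≤ A := (mul_nonneg ht.le hg).trans hA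
  have hgA : g ≤ A / t := by rw [le_div_iff₀ ht]; linarith
  have hc : 0 ≤ (1 + 1 / t) * A := by positivity
  have hconc := (Real.concaveOn_rpow hs0 hs1).map_add_sub_map_le hA0
    (show B + (1 + 1 / t) * A ∈ Ici 0 from add_nonneg (hA0.trans hAB) hc) hAB hc
  have hAd : A + (1 + 1 / t) * A = (2 + 1 / t) * A := by ring
  rw [hAd, Real.mul_rpow (by positivity) hA0] at hconc
  calc (A + g + B) ^ s ≤ (B + (1 + 1 / t) * A) ^ s := by
        refine Real.rpow_le_rpow (by linarith) ?_ hs0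
        have : A / t = 1 / t * A := by ring
        linarith
    _ ≤ A ^ s + B ^ s := by
        nlinarith [Real.rpow_nonneg hA0 s]

-- The `max` keeps the base of `Real.rpow` nonnegative when `p.2 < p.1`.
noncomputable def intervalCost (s : ℝ) (p : ℝ × ℝ) : ℝ := max (p.2 - p.1) 0 ^ s

theorem intervalCost_nonneg (s : ℝ) (p : ℝ × ℝ) : 0 ≤ intervalCost s p :=
  Real.rpow_nonneg (le_max_right _ _) _

theorem rpow_le_intervalCost {s x : ℝ} {p : ℝ × ℝ} (hs : 0 ≤ s) (hx : 0 ≤ x)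
    (h : x ≤ p.2 - p.1) : x ^ s ≤ intervalCost s p :=
  Real.rpow_le_rpow hx (le_max_of_le_left h) hs

theorem intervalCost_min_max_le {s : ℝ} (hs0 : 0 ≤ s) (hs1 : s ≤ 1) {p q : ℝ × ℝ}
    (h : ¬Disjoint (Ioo p.1 p.2) (Ioo q.1 q.2)) :
    intervalCost s (min p.1 q.1, max p.2 q.2) ≤ intervalCost s p + intervalCost s q := by
  rw [not_disjoint_iff_nonempty_inter, Ioo_inter_Ioo, nonempty_Ioo] at h
  have hp : p.1 < p.2 := (le_max_left _ _).trans_lt (h.trans_le (min_le_left _ _))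
  have hq : q.1 < q.2 := (le_max_right _ _).trans_lt (h.trans_le (min_le_right _ _))
  calc intervalCost s (min p.1 q.1, max p.2 q.2) ≤ ((p.2 - p.1) + (q.2 - q.1)) ^ s := by
        refine Real.rpow_le_rpow (le_max_right _ _) (max_le ?_ (by linarith)) hs0
        linarith [min_add_max p.1 q.1, min_add_max p.2 q.2]
    _ ≤ (p.2 - p.1) ^ s + (q.2 - q.1) ^ s :=
        Real.rpow_add_le_add_rpow (by linarith) (by linarith) hs0 hs1
    _ = intervalCost s p + intervalCost s q := by
        rw [intervalCost, intervalCost, max_eq_left (by linarith), max_eq_left (by linarith)]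

/-- Merging two overlapping intervals into their hull never increases the total cost. -/
theorem exists_pairwiseDisjoint_cover_intervalCost_le {s : ℝ} (hs0 : 0 ≤ s) (hs1 : s ≤ 1)
    (F : Finset (ℝ × ℝ)) :
    ∃ F' : Finset (ℝ × ℝ), (F' : Set (ℝ × ℝ)).PairwiseDisjoint (fun p => Ioo p.1 p.2) ∧
      (⋃ p ∈ F, Ioo p.1 p.2) ⊆ (⋃ p ∈ F', Ioo p.1 p.2) ∧
      ∑ p ∈ F', intervalCost s p ≤ ∑ p ∈ F, intervalCost s p := by
  induction hn : F.card using Nat.strong_induction_on generalizing F with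
  | _ n ih =>
    by_cases hF : (F : Set (ℝ × ℝ)).PairwiseDisjoint (fun p => Ioo p.1 p.2)
    · exact ⟨F, hF, subset_rfl, le_rfl⟩
    simp only [Set.PairwiseDisjoint, Set.Pairwise, Finset.mem_coe, Function.onFun] at hF
    push Not at hF
    obtain ⟨p, hp, q, hq, hpq, hover⟩ := hF
    set m : ℝ × ℝ := (min p.1 q.1, max p.2 q.2)
    set E := (F.erase p).erase q
    have hqE : q ∈ F.erase p := Finset.mem_erase.2 ⟨hpq.symm, hq⟩
    have hcardE : E.card + 2 = n := by
      rw [Finset.card_erase_of_mem hqE, Finset.card_erase_of_mem hp, ← hn]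
      have := Finset.one_lt_card.2 ⟨p, hp, q, hq, hpq⟩
      omega
    obtain ⟨F', hdisj, hcov, hcost⟩ := ih _ (by have := Finset.card_insert_le m E; omega)
      (insert m E) rfl
    refine ⟨F', hdisj, fun x hx => hcov ?_, hcost.trans ?_⟩
    · simp only [mem_iUnion, exists_prop] at hx ⊢
      obtain ⟨r, hr, hxr⟩ := hx
      by_cases hrE : r ∈ E
      · exact ⟨r, Finset.mem_insert_of_mem hrE, hxr⟩
      refine ⟨m, Finset.mem_insert_self _ _, ?_⟩
      obtain rfl | rfl : r = q ∨ r = p := by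
        simp only [E, Finset.mem_erase, not_and_or, not_not] at hrE
        tauto
      · exact ⟨(min_le_right _ _).trans_lt hxr.1, hxr.2.trans_le (le_max_right _ _)⟩
      · exact ⟨(min_le_left _ _).trans_lt hxr.1, hxr.2.trans_le (le_max_left _ _)⟩
    · have hinsert : ∑ r ∈ insert m E, intervalCost s r ≤
          intervalCost s m + ∑ r ∈ E, intervalCost s r := by
        by_cases hm : m ∈ E
        · rw [Finset.insert_eq_of_mem hm]
          exact le_add_of_nonneg_left (intervalCost_nonneg s m)
        · rw [Finset.sum_insert hm]
      rw [← Finset.add_sum_erase F _ hp, ← Finset.add_sum_erase _ _ hqE]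
      linarith [intervalCost_min_max_le hs0 hs1 hover]

theorem exists_Ioo_superset_intervalCost_le {T : Set ℝ} (hT : Bornology.IsBounded T) {s η : ℝ}
    (hs0 : 0 < s) (hs1 : s ≤ 1) (hη : 0 < η) :
    ∃ p : ℝ × ℝ, T ⊆ Ioo p.1 p.2 ∧ intervalCost s p ≤ Metric.diam T ^ s + η := by
  set δ := η ^ s⁻¹ / 2
  have hδ : 0 < δ := by positivity
  have h2δ : (2 * δ) ^ s = η := by
    rw [mul_div_cancel₀ _ two_ne_zero, ← Real.rpow_mul hη.le, inv_mul_cancel₀ hs0.ne',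
      Real.rpow_one]
  refine ⟨(sInf T - δ, sSup T + δ), fun x hx => ⟨?_, ?_⟩, ?_⟩
  · linarith [csInf_le hT.bddBelow hx]
  · linarith [le_csSup hT.bddAbove hx]
  calc intervalCost s (sInf T - δ, sSup T + δ) = (Metric.diam T + 2 * δ) ^ s := by
        rw [intervalCost, Real.diam_eq hT,
          max_eq_left (by linarith [Real.sInf_le_sSup T hT.bddBelow hT.bddAbove])]
        ring_nf
    _ ≤ Metric.diam T ^ s + (2 * δ) ^ s :=
        Real.rpow_add_le_add_rpow Metric.diam_nonneg (by positivity) hs0.le hs1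
    _ = Metric.diam T ^ s + η := by rw [h2δ]

theorem ofReal_diam_rpow_le {T : Set ℝ} {s : ℝ} (hs : 0 < s) :
    ENNReal.ofReal (Metric.diam T ^ s) ≤ ⨆ _ : T.Nonempty, Metric.ediam T ^ s := by
  rcases T.eq_empty_or_nonempty with rfl | hT
  · simp [Real.zero_rpow hs.ne']
  rw [iSup_pos hT, ← ENNReal.ofReal_rpow_of_nonneg Metric.diam_nonneg hs.le]
  exact ENNReal.rpow_le_rpow ENNReal.ofReal_toReal_le hs.le

/-- Enlarge each set of a countable cover to an open interval at small extra cost and extract a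
finite subcover. -/
theorem ofReal_le_hausdorffMeasure_of_le_sum_intervalCost {C : Set ℝ} (hC : IsCompact C)
    {s X : ℝ} (hs0 : 0 < s) (hs1 : s ≤ 1)
    (hX : ∀ F : Finset (ℝ × ℝ), C ⊆ ⋃ p ∈ F, Ioo p.1 p.2 → X ≤ ∑ p ∈ F, intervalCost s p) :
    ENNReal.ofReal X ≤ μH[s] C := by
  rw [Measure.hausdorffMeasure_apply]
  refine le_iSup₂_of_le 1 one_pos <| le_iInf₂ fun T hT => le_iInf fun _ => ?_
  set a : ℕ → ℝ≥0∞ := fun n => ⨆ _ : (T n).Nonempty, Metric.ediam (T n) ^ s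
  refine ENNReal.le_of_forall_pos_le_add fun ε hε hlt => ?_
  have hbdd (n : ℕ) : Bornology.IsBounded (T n) := by
    rcases (T n).eq_empty_or_nonempty with h | h
    · exact h ▸ Bornology.isBounded_empty
    have han : a n ≠ ⊤ := ne_top_of_le_ne_top hlt.ne (ENNReal.le_tsum n)
    rw [Metric.isBounded_iff_ediam_ne_top]
    simp only [a, iSup_pos h] at han
    exact fun htop => han (by rw [htop, ENNReal.top_rpow_of_pos hs0])
  obtain ⟨η, hη0, hη⟩ := ENNReal.exists_pos_sum_of_countable (ENNReal.coe_ne_zero.2 hε.ne') ℕ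
  choose I hTI hI using fun n =>
    exists_Ioo_superset_intervalCost_le (hbdd n) hs0 hs1 (NNReal.coe_pos.2 (hη0 n))
  obtain ⟨G, hG⟩ := hC.elim_finite_subcover (fun n => Ioo (I n).1 (I n).2)
    (fun _ => isOpen_Ioo) (hT.trans (iUnion_mono hTI))
  have hGX : X ≤ ∑ n ∈ G, intervalCost s (I n) :=
    (hX (G.image I) (by rwa [Finset.set_biUnion_finset_image])).trans
      (Finset.sum_image_le_of_nonneg fun _ _ => intervalCost_nonneg _ _)
  calc ENNReal.ofReal X ≤ ∑ n ∈ G, ENNReal.ofReal (intervalCost s (I n)) := by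
        rw [← ENNReal.ofReal_sum_of_nonneg fun _ _ => intervalCost_nonneg _ _]
        exact ENNReal.ofReal_le_ofReal hGX
    _ ≤ ∑ n ∈ G, (a n + η n) := by
        refine Finset.sum_le_sum fun n _ => (ENNReal.ofReal_le_ofReal (hI n)).trans ?_
        rw [ENNReal.ofReal_add (Real.rpow_nonneg Metric.diam_nonneg _) (η n).coe_nonneg,
          ENNReal.ofReal_coe_nnreal]
        exact add_le_add_left (ofReal_diam_rpow_le hs0) _
    _ = ∑ n ∈ G, a n + ∑ n ∈ G, (η n : ℝ≥0∞) := Finset.sum_add_distrib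
    _ ≤ ∑' n, a n + ε := add_le_add (ENNReal.sum_le_tsum G) ((ENNReal.sum_le_tsum G).trans hη.le)

section Gaps

variable {C : Set ℝ} {U : ℕ → Set ℝ}

theorem subset_cHull (hC : IsCompact C) : C ⊆ cHull C :=
  fun _ hx => ⟨csInf_le hC.bddBelow hx, le_csSup hC.bddAbove hx⟩

theorem IsGap.subset {G : Set ℝ} (h : IsGap C G) : G ⊆ cHull C \ C := by
  obtain ⟨x, -, rfl⟩ := h
  exact connectedComponentIn_subset _ _

/-- A gap is the open interval between the last point of `C` before any of its points and the
first one after it. -/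
theorem IsGap.exists_eq_Ioo (hC : IsCompact C) (hne : C.Nonempty) {G : Set ℝ} (h : IsGap C G) :
    ∃ a ∈ C, ∃ b ∈ C, a < b ∧ G = Ioo a b := by
  obtain ⟨x, hx, rfl⟩ := h
  have hxC : x ∉ C := hx.2
  have hleft : (C ∩ Iic x).Nonempty := ⟨sInf C, hC.sInf_mem hne, hx.1.1⟩
  have hright : (C ∩ Ici x).Nonempty := ⟨sSup C, hC.sSup_mem hne, hx.1.2⟩
  set a := sSup (C ∩ Iic x)
  set b := sInf (C ∩ Ici x)
  obtain ⟨haC, hax⟩ : a ∈ C ∩ Iic x := (hC.inter_right isClosed_Iic).sSup_mem hleft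
  obtain ⟨hbC, hxb⟩ : b ∈ C ∩ Ici x := (hC.inter_right isClosed_Ici).sInf_mem hright
  have hax : a < x := lt_of_le_of_ne hax fun h => hxC (h ▸ haC)
  have hxb : x < b := lt_of_le_of_ne hxb fun h => hxC (h ▸ hbC)
  refine ⟨a, haC, b, hbC, hax.trans hxb, subset_antisymm ?_ ?_⟩
  · have hK := isPreconnected_connectedComponentIn (F := cHull C \ C) (x := x)
    have hxK := mem_connectedComponentIn hx
    intro y hy
    constructor
    · exact lt_of_not_ge fun hya =>
        (connectedComponentIn_subset _ _ (hK.Icc_subset hy hxK ⟨hya, hax.le⟩)).2 haC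
    · exact lt_of_not_ge fun hby =>
        (connectedComponentIn_subset _ _ (hK.Icc_subset hxK hy ⟨hxb.le, hby⟩)).2 hbC
  · refine isPreconnected_Ioo.subset_connectedComponentIn ⟨hax, hxb⟩ fun y hy => ⟨?_, fun hyC => ?_⟩
    · exact ⟨(csInf_le hC.bddBelow haC).trans hy.1.le, hy.2.le.trans (le_csSup hC.bddAbove hbC)⟩
    rcases le_total y x with hyx | hxy
    · exact (le_csSup (hC.inter_right isClosed_Iic).bddAbove ⟨hyC, hyx⟩).not_gt hy.1
    · exact (csInf_le (hC.inter_right isClosed_Ici).bddBelow ⟨hyC, hxy⟩).not_gt hy.2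

noncomputable def gapLo (U : ℕ → Set ℝ) (i : ℕ) : ℝ := sInf (U i)

noncomputable def gapHi (U : ℕ → Set ℝ) (i : ℕ) : ℝ := sSup (U i)

namespace IsPresentation

theorem eq_Ioo (hC : IsCompact C) (hne : C.Nonempty) (hU : IsPresentation C U) (i : ℕ) :
    U i = Ioo (gapLo U i) (gapHi U i) := by
  obtain ⟨a, -, b, -, hab, h⟩ := (hU.1 i).exists_eq_Ioo hC hne
  rw [gapLo, gapHi, h, csInf_Ioo hab, csSup_Ioo hab]

theorem gapLo_mem (hC : IsCompact C) (hne : C.Nonempty) (hU : IsPresentation C U) (i : ℕ) :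
    gapLo U i ∈ C := by
  obtain ⟨a, ha, b, -, hab, h⟩ := (hU.1 i).exists_eq_Ioo hC hne
  rwa [gapLo, h, csInf_Ioo hab]

theorem gapHi_mem (hC : IsCompact C) (hne : C.Nonempty) (hU : IsPresentation C U) (i : ℕ) :
    gapHi U i ∈ C := by
  obtain ⟨a, -, b, hb, hab, h⟩ := (hU.1 i).exists_eq_Ioo hC hne
  rwa [gapHi, h, csSup_Ioo hab]

theorem gapLo_lt_gapHi (hC : IsCompact C) (hne : C.Nonempty) (hU : IsPresentation C U)
    (i : ℕ) : gapLo U i < gapHi U i := by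
  obtain ⟨a, -, b, -, hab, h⟩ := (hU.1 i).exists_eq_Ioo hC hne
  rwa [gapLo, gapHi, h, csInf_Ioo hab, csSup_Ioo hab]

theorem exists_mem (hU : IsPresentation C U) {x : ℝ} (hx : x ∈ cHull C \ C) : ∃ i, x ∈ U i := by
  obtain ⟨i, hi⟩ := hU.2.2 _ ⟨x, hx, rfl⟩
  exact ⟨i, hi ▸ mem_connectedComponentIn hx⟩

theorem notMem (hU : IsPresentation C U) (i : ℕ) {x : ℝ} (hx : x ∈ C) : x ∉ U i :=
  fun h => ((hU.1 i).subset h).2 hx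

end IsPresentation

end Gaps

theorem IsPreconnected.subset_Ici_of_disjoint_Ioo {K : Set ℝ} (hK : IsPreconnected K) {x l a : ℝ}
    (hx : x ∈ K) (hla : l < a) (hax : a ≤ x) (hd : Disjoint K (Ioo l a)) : K ⊆ Ici a := by
  intro y hy
  rw [mem_Ici]
  by_contra! hya
  have hc : (max y l + a) / 2 ∈ Ioo l a := by
    constructor <;> linarith [le_max_left y l, le_max_right y l, max_lt hya hla]
  refine disjoint_left.1 hd (hK.Icc_subset hy hx ⟨?_, ?_⟩) hc <;>
    linarith [le_max_left y l, max_lt hya hla]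

theorem IsPreconnected.subset_Iic_of_disjoint_Ioo {K : Set ℝ} (hK : IsPreconnected K) {x b r : ℝ}
    (hx : x ∈ K) (hxb : x ≤ b) (hbr : b < r) (hd : Disjoint K (Ioo b r)) : K ⊆ Iic b := by
  intro y hy
  rw [mem_Iic]
  by_contra! hby
  have hc : (b + min y r) / 2 ∈ Ioo b r := by
    constructor <;> linarith [min_le_left y r, min_le_right y r, lt_min hby hbr]
  refine disjoint_left.1 hd (hK.Icc_subset hx hy ⟨?_, ?_⟩) hc <;>
    linarith [min_le_left y r, lt_min hby hbr]

section Bridges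

variable {C : Set ℝ} {U : ℕ → Set ℝ}

theorem bridge_subset (C : Set ℝ) (U : ℕ → Set ℝ) (i : ℕ) (u : ℝ) :
    bridge C U i u ⊆ cHull C \ ⋃ k ∈ Finset.range (i + 1), U k :=
  connectedComponentIn_subset _ _

theorem disjoint_bridge_gap {i k : ℕ} (hk : k ≤ i) (u : ℝ) : Disjoint (bridge C U i u) (U k) :=
  disjoint_left.2 fun _ hy hyk => (bridge_subset C U i u hy).2 <|
    mem_biUnion (Finset.mem_coe.2 (Finset.mem_range.2 (Nat.lt_succ_of_le hk))) hyk

theorem mem_bridge (hC : IsCompact C) (hU : IsPresentation C U) (i : ℕ) {u : ℝ} (hu : u ∈ C) :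
    u ∈ bridge C U i u := by
  refine mem_connectedComponentIn ⟨subset_cHull hC hu, ?_⟩
  simp only [mem_iUnion, not_exists]
  exact fun k _ => hU.notMem k hu

theorem mul_gap_lt_of_bridge_subset_Icc (hC : IsCompact C) (hne : C.Nonempty)
    (hU : IsPresentation C U) {t : ℝ}
    (hth : ∀ n, ∀ u ∈ frontier (U n) ∩ C, ENNReal.ofReal t < gapRatio C U n u)
    {i : ℕ} {u a b : ℝ} (hu : u = gapLo U i ∨ u = gapHi U i) (hab : a ≤ b)
    (hK : bridge C U i u ⊆ Icc a b) : t * (gapHi U i - gapLo U i) < b - a := by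
  have hgap := hU.gapLo_lt_gapHi hC hne i
  have hfr : u ∈ frontier (U i) ∩ C := by
    rw [hU.eq_Ioo hC hne i, frontier_Ioo hgap]
    rcases hu with rfl | rfl
    exacts [⟨Or.inl rfl, hU.gapLo_mem hC hne i⟩, ⟨Or.inr rfl, hU.gapHi_mem hC hne i⟩]
  have h := hth i u hfr
  rw [gapRatio, hU.eq_Ioo hC hne i, Real.diam_Ioo hgap.le,
    ← ENNReal.ofReal_div_of_pos (sub_pos.2 hgap), ENNReal.ofReal_lt_ofReal_iff'] at h
  calc t * (gapHi U i - gapLo U i) < Metric.diam (bridge C U i u) :=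
        (lt_div_iff₀ (sub_pos.2 hgap)).1 h.1
    _ ≤ b - a := by
        simpa [Real.diam_Icc hab] using Metric.diam_mono hK (Metric.isBounded_Icc a b)

theorem mul_gap_le_gapLo_sub (hC : IsCompact C) (hne : C.Nonempty)
    (hU : IsPresentation C U) {t : ℝ}
    (hth : ∀ n, ∀ u ∈ frontier (U n) ∩ C, ENNReal.ofReal t < gapRatio C U n u)
    {i : ℕ} {a : ℝ} (hai : a ≤ gapLo U i) (ha : a = sInf C ∨ ∃ j ≤ i, gapHi U j = a) :
    t * (gapHi U i - gapLo U i) ≤ gapLo U i - a := by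
  set K := bridge C U i (gapLo U i)
  have hK : IsPreconnected K := isPreconnected_connectedComponentIn
  have hlo : gapLo U i ∈ K := mem_bridge hC hU i (hU.gapLo_mem hC hne i)
  obtain ⟨l, hla, hdisj⟩ : ∃ l < a, Disjoint K (Ioo l a) := by
    rcases ha with rfl | ⟨j, hj, rfl⟩
    · refine ⟨sInf C - 1, by linarith, disjoint_left.2 fun y hy hy' => ?_⟩
      exact hy'.2.not_ge (bridge_subset C U i _ hy).1.1
    · exact ⟨gapLo U j, hU.gapLo_lt_gapHi hC hne j,
        hU.eq_Ioo hC hne j ▸ disjoint_bridge_gap hj _⟩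
  have hleft := hK.subset_Ici_of_disjoint_Ioo hlo hla hai hdisj
  have hright := hK.subset_Iic_of_disjoint_Ioo hlo le_rfl (hU.gapLo_lt_gapHi hC hne i)
    (hU.eq_Ioo hC hne i ▸ disjoint_bridge_gap le_rfl _)
  exact (mul_gap_lt_of_bridge_subset_Icc hC hne hU hth (Or.inl rfl) hai
    fun y hy => ⟨hleft hy, hright hy⟩).le

theorem mul_gap_le_sub_gapHi (hC : IsCompact C) (hne : C.Nonempty)
    (hU : IsPresentation C U) {t : ℝ}
    (hth : ∀ n, ∀ u ∈ frontier (U n) ∩ C, ENNReal.ofReal t < gapRatio C U n u)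
    {i : ℕ} {b : ℝ} (hib : gapHi U i ≤ b) (hb : b = sSup C ∨ ∃ j ≤ i, gapLo U j = b) :
    t * (gapHi U i - gapLo U i) ≤ b - gapHi U i := by
  set K := bridge C U i (gapHi U i)
  have hK : IsPreconnected K := isPreconnected_connectedComponentIn
  have hhi : gapHi U i ∈ K := mem_bridge hC hU i (hU.gapHi_mem hC hne i)
  obtain ⟨r, hbr, hdisj⟩ : ∃ r > b, Disjoint K (Ioo b r) := by
    rcases hb with rfl | ⟨j, hj, rfl⟩
    · refine ⟨sSup C + 1, by linarith, disjoint_left.2 fun y hy hy' => ?_⟩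
      exact hy'.1.not_ge (bridge_subset C U i _ hy).1.2
    · exact ⟨gapHi U j, hU.gapLo_lt_gapHi hC hne j,
        hU.eq_Ioo hC hne j ▸ disjoint_bridge_gap hj _⟩
  have hleft := hK.subset_Ici_of_disjoint_Ioo hhi (hU.gapLo_lt_gapHi hC hne i) le_rfl
    (hU.eq_Ioo hC hne i ▸ disjoint_bridge_gap le_rfl _)
  have hright := hK.subset_Iic_of_disjoint_Ioo hhi hib hbr hdisj
  exact (mul_gap_lt_of_bridge_subset_Icc hC hne hU hth (Or.inr rfl) hib
    fun y hy => ⟨hleft hy, hright hy⟩).le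

end Bridges

section Covering

variable {C : Set ℝ} {U : ℕ → Set ℝ}

theorem right_notMem_Ioo_of_pairwiseDisjoint {F : Finset (ℝ × ℝ)}
    (hF : (F : Set (ℝ × ℝ)).PairwiseDisjoint (fun p => Ioo p.1 p.2)) {p q : ℝ × ℝ}
    (hp : p ∈ F) (hq : q ∈ F) (hpq : p.1 < p.2) : p.2 ∉ Ioo q.1 q.2 := by
  intro h
  obtain rfl | hne := eq_or_ne p q
  · exact lt_irrefl _ h.2
  have := hF hp hq hne
  rw [Function.onFun, disjoint_iff_inter_eq_empty, Ioo_inter_Ioo, Ioo_eq_empty_iff] at this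
  exact this (max_lt (lt_min hpq (hpq.trans h.2)) (lt_min h.1 (h.1.trans h.2)))

def IsSplitGap (U : ℕ → Set ℝ) (F : Finset (ℝ × ℝ)) (a b : ℝ) (i : ℕ) : Prop :=
  a ≤ gapLo U i ∧ gapHi U i ≤ b ∧ ∀ p ∈ F, gapLo U i ∈ Ioo p.1 p.2 → gapHi U i ∉ Ioo p.1 p.2

/-- Guarantees that the bridge of the smallest-index gap split by `F` in `[a, b]` does not extend
to the left of `a`. -/
def IsLeftGuard (C : Set ℝ) (U : ℕ → Set ℝ) (F : Finset (ℝ × ℝ)) (a b : ℝ) : Prop :=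
  a = sInf C ∨ ∃ j, gapHi U j = a ∧ ∀ i, IsSplitGap U F a b i → j ≤ i

def IsRightGuard (C : Set ℝ) (U : ℕ → Set ℝ) (F : Finset (ℝ × ℝ)) (a b : ℝ) : Prop :=
  b = sSup C ∨ ∃ j, gapLo U j = b ∧ ∀ i, IsSplitGap U F a b i → j ≤ i

theorem IsLeftGuard.mono {F F' : Finset (ℝ × ℝ)} {a b b' : ℝ} (h : IsLeftGuard C U F a b)
    (hsplit : ∀ i, IsSplitGap U F' a b' i → IsSplitGap U F a b i) :
    IsLeftGuard C U F' a b' :=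
  h.imp_right fun ⟨j, hj, hmin⟩ => ⟨j, hj, fun i hi => hmin i (hsplit i hi)⟩

theorem IsRightGuard.mono {F F' : Finset (ℝ × ℝ)} {a a' b : ℝ} (h : IsRightGuard C U F a b)
    (hsplit : ∀ i, IsSplitGap U F' a' b i → IsSplitGap U F a b i) :
    IsRightGuard C U F' a' b :=
  h.imp_right fun ⟨j, hj, hmin⟩ => ⟨j, hj, fun i hi => hmin i (hsplit i hi)⟩

/-- The right end of the interval covering `a` is not in `C`; the gap containing it is split. -/
theorem exists_isSplitGap (hC : IsCompact C) (hne : C.Nonempty) (hU : IsPresentation C U)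
    {F : Finset (ℝ × ℝ)} (hF : (F : Set (ℝ × ℝ)).PairwiseDisjoint (fun p => Ioo p.1 p.2))
    {a b : ℝ} (ha : a ∈ C) (hb : b ∈ C) (hab : a ≤ b)
    (hcov : C ∩ Icc a b ⊆ ⋃ p ∈ F, Ioo p.1 p.2)
    (hnot : ∀ p ∈ F, a ∈ Ioo p.1 p.2 → b ∉ Ioo p.1 p.2) : ∃ i, IsSplitGap U F a b i := by
  obtain ⟨p, hp, hap⟩ := mem_iUnion₂.1 (hcov ⟨ha, le_rfl, hab⟩)
  have hfree : p.2 ∉ ⋃ q ∈ F, Ioo q.1 q.2 := by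
    simp only [mem_iUnion, not_exists]
    exact fun q hq => right_notMem_Ioo_of_pairwiseDisjoint hF hp hq (hap.1.trans hap.2)
  have hpb : p.2 ≤ b := le_of_not_gt fun h => hnot p hp hap ⟨hap.1.trans_le hab, h⟩
  have hpC : p.2 ∉ C := fun h => hfree (hcov ⟨h, hap.2.le, hpb⟩)
  have hpH : p.2 ∈ cHull C \ C :=
    ⟨⟨(subset_cHull hC ha).1.trans hap.2.le, hpb.trans (subset_cHull hC hb).2⟩, hpC⟩
  obtain ⟨i, hi⟩ := hU.exists_mem hpH
  rw [hU.eq_Ioo hC hne i] at hi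
  refine ⟨i, le_of_not_gt fun h => ?_, le_of_not_gt fun h => ?_, fun q hq hlo hhi => ?_⟩
  · exact hU.notMem i ha (hU.eq_Ioo hC hne i ▸ ⟨h, hap.2.trans hi.2⟩)
  · exact hU.notMem i hb (hU.eq_Ioo hC hne i ▸ ⟨hi.1.trans_le hpb, h⟩)
  · exact hfree (mem_iUnion₂.2 ⟨q, hq, hlo.1.trans hi.1, hi.2.trans hhi.2⟩)

theorem IsSplitGap.of_filter_fst_lt {F : Finset (ℝ × ℝ)} {a b c : ℝ} {i : ℕ}
    (h : IsSplitGap U (F.filter (·.1 < c)) a c i) (hcb : c ≤ b) : IsSplitGap U F a b i :=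
  ⟨h.1, h.2.1.trans hcb, fun p hp hlo hhi =>
    h.2.2 p (Finset.mem_filter.2 ⟨hp, hhi.1.trans_le h.2.1⟩) hlo hhi⟩

theorem IsSplitGap.of_filter_not_fst_lt {F : Finset (ℝ × ℝ)} {a b c d : ℝ} {i : ℕ}
    (hcut : ∀ p ∈ F, c ∈ Ioo p.1 p.2 → d ∉ Ioo p.1 p.2) (hcd : c ≤ d)
    (h : IsSplitGap U (F.filter (¬·.1 < c)) d b i) (had : a ≤ d) : IsSplitGap U F a b i := by
  refine ⟨had.trans h.1, h.2.1, fun p hp hlo hhi => ?_⟩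
  by_cases hpc : p.1 < c
  · exact hcut p hp ⟨hpc, hcd.trans_lt (h.1.trans_lt hlo.2)⟩
      ⟨hpc.trans_le hcd, h.1.trans_lt hlo.2⟩
  · exact h.2.2 p (Finset.mem_filter.2 ⟨hp, hpc⟩) hlo hhi

theorem subset_biUnion_filter_fst_lt {F : Finset (ℝ × ℝ)} {a b c : ℝ}
    (hcov : C ∩ Icc a b ⊆ ⋃ p ∈ F, Ioo p.1 p.2) (hcb : c ≤ b) :
    C ∩ Icc a c ⊆ ⋃ p ∈ F.filter (·.1 < c), Ioo p.1 p.2 := by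
  intro x hx
  obtain ⟨p, hp, hxp⟩ := mem_iUnion₂.1 (hcov ⟨hx.1, hx.2.1, hx.2.2.trans hcb⟩)
  exact mem_iUnion₂.2 ⟨p, Finset.mem_filter.2 ⟨hp, hxp.1.trans_le hx.2.2⟩, hxp⟩

theorem subset_biUnion_filter_not_fst_lt {F : Finset (ℝ × ℝ)} {a b c d : ℝ}
    (hcov : C ∩ Icc a b ⊆ ⋃ p ∈ F, Ioo p.1 p.2)
    (hcut : ∀ p ∈ F, c ∈ Ioo p.1 p.2 → d ∉ Ioo p.1 p.2) (hcd : c ≤ d) (had : a ≤ d) :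
    C ∩ Icc d b ⊆ ⋃ p ∈ F.filter (¬·.1 < c), Ioo p.1 p.2 := by
  intro x hx
  obtain ⟨p, hp, hxp⟩ := mem_iUnion₂.1 (hcov ⟨hx.1, had.trans hx.2.1, hx.2.2⟩)
  refine mem_iUnion₂.2 ⟨p, Finset.mem_filter.2 ⟨hp, fun hpc => ?_⟩, hxp⟩
  exact hcut p hp ⟨hpc, hcd.trans_lt (hx.2.1.trans_lt hxp.2)⟩
    ⟨hpc.trans_le hcd, hx.2.1.trans_lt hxp.2⟩

theorem rpow_sub_le_sum_intervalCost (hC : IsCompact C) (hne : C.Nonempty)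
    (hU : IsPresentation C U) {t s : ℝ} (ht : 0 < t)
    (hth : ∀ n, ∀ u ∈ frontier (U n) ∩ C, ENNReal.ofReal t < gapRatio C U n u)
    (hs : 0 ≤ s) (hst : (2 + 1 / t) ^ s ≤ 2) (F : Finset (ℝ × ℝ))
    (hF : (F : Set (ℝ × ℝ)).PairwiseDisjoint (fun p => Ioo p.1 p.2)) {a b : ℝ} (ha : a ∈ C)
    (hb : b ∈ C) (hab : a ≤ b) (hcov : C ∩ Icc a b ⊆ ⋃ p ∈ F, Ioo p.1 p.2)
    (hla : IsLeftGuard C U F a b) (hrb : IsRightGuard C U F a b) :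
    (b - a) ^ s ≤ ∑ p ∈ F, intervalCost s p := by
  induction F using Finset.strongInduction generalizing a b with
  | H F ih =>
    by_cases hone : ∃ p ∈ F, a ∈ Ioo p.1 p.2 ∧ b ∈ Ioo p.1 p.2
    · obtain ⟨p, hp, hap, hbp⟩ := hone
      exact (rpow_le_intervalCost hs (sub_nonneg.2 hab) (by linarith [hap.1, hbp.2])).trans
        (Finset.single_le_sum (fun q _ => intervalCost_nonneg s q) hp)
    push Not at hone
    classical
    have hex := exists_isSplitGap hC hne hU hF ha hb hab hcov hone
    set i := Nat.find hex
    have hi : IsSplitGap U F a b i := Nat.find_spec hex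
    have hmin : ∀ j, IsSplitGap U F a b j → i ≤ j := fun j hj => Nat.find_min' hex hj
    obtain ⟨hai, hib, hcut⟩ := hi
    have hcd := hU.gapLo_lt_gapHi hC hne i
    have hA := mul_gap_le_gapLo_sub hC hne hU hth hai
      (hla.imp_right fun ⟨j, hj, hjmin⟩ => ⟨j, hjmin i ⟨hai, hib, hcut⟩, hj⟩)
    have hB := mul_gap_le_sub_gapHi hC hne hU hth hib
      (hrb.imp_right fun ⟨j, hj, hjmin⟩ => ⟨j, hjmin i ⟨hai, hib, hcut⟩, hj⟩)
    obtain ⟨q, hq, hdq⟩ := mem_iUnion₂.1 (hcov ⟨hU.gapHi_mem hC hne i, by linarith, hib⟩)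
    obtain ⟨r, hr, hcr⟩ := mem_iUnion₂.1 (hcov ⟨hU.gapLo_mem hC hne i, hai, by linarith⟩)
    have hsplit₁ (j : ℕ) (hj : IsSplitGap U (F.filter (·.1 < gapLo U i)) a (gapLo U i) j) :
        IsSplitGap U F a b j := hj.of_filter_fst_lt (by linarith)
    have hsplit₂ (j : ℕ) (hj : IsSplitGap U (F.filter (¬·.1 < gapLo U i)) (gapHi U i) b j) :
        IsSplitGap U F a b j := hj.of_filter_not_fst_lt hcut hcd.le (by linarith)
    have ih₁ := ih _ (Finset.filter_ssubset.2 ⟨q, hq, fun h => hcut q hq ⟨h, hcd.trans hdq.2⟩ hdq⟩)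
      (hF.subset (Finset.coe_subset.2 (Finset.filter_subset _ _))) ha (hU.gapLo_mem hC hne i)
      hai (subset_biUnion_filter_fst_lt hcov (by linarith)) (hla.mono hsplit₁)
      (Or.inr ⟨i, rfl, fun j hj => hmin j (hsplit₁ j hj)⟩)
    have ih₂ := ih _ (Finset.filter_ssubset.2 ⟨r, hr, not_not.2 hcr.1⟩)
      (hF.subset (Finset.coe_subset.2 (Finset.filter_subset _ _))) (hU.gapHi_mem hC hne i) hb
      hib (subset_biUnion_filter_not_fst_lt hcov hcut hcd.le (by linarith))
      (Or.inr ⟨i, rfl, fun j hj => hmin j (hsplit₂ j hj)⟩) (hrb.mono hsplit₂)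
    calc (b - a) ^ s = ((gapLo U i - a) + (gapHi U i - gapLo U i) + (b - gapHi U i)) ^ s := by
          ring_nf
      _ ≤ (gapLo U i - a) ^ s + (b - gapHi U i) ^ s :=
          rpow_add_add_le_of_two_add_inv_rpow_le ht hs hst (by linarith) hA hB
      _ ≤ _ := add_le_add ih₁ ih₂
      _ = ∑ p ∈ F, intervalCost s p := Finset.sum_filter_add_sum_filter_not F _ _

end Covering

theorem hausdorffMeasure_ne_zero_of_lt_gapRatio {C : Set ℝ} {U : ℕ → Set ℝ} (hC : IsCompact C)
    (hne : C.Nonempty) (hU : IsPresentation C U) {t s : ℝ} (ht : 0 < t)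
    (hth : ∀ n, ∀ u ∈ frontier (U n) ∩ C, ENNReal.ofReal t < gapRatio C U n u)
    (hs : 0 < s) (hst : (2 + 1 / t) ^ s ≤ 2) : μH[s] C ≠ 0 := by
  have hs1 := le_one_of_two_add_inv_rpow_le ht hst
  have hhull : sInf C < sSup C :=
    ((csInf_le hC.bddBelow (hU.gapLo_mem hC hne 0)).trans_lt (hU.gapLo_lt_gapHi hC hne 0)).trans_le
      (le_csSup hC.bddAbove (hU.gapHi_mem hC hne 0))
  have hbound : ENNReal.ofReal ((sSup C - sInf C) ^ s) ≤ μH[s] C := by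
    refine ofReal_le_hausdorffMeasure_of_le_sum_intervalCost hC hs hs1 fun F hcov => ?_
    obtain ⟨F', hdisj, hsub, hcost⟩ := exists_pairwiseDisjoint_cover_intervalCost_le hs.le hs1 F
    exact (rpow_sub_le_sum_intervalCost hC hne hU ht hth hs.le hst F' hdisj (hC.sInf_mem hne)
      (hC.sSup_mem hne) hhull.le (fun x hx => hsub (hcov hx.1)) (Or.inl rfl) (Or.inl rfl)).trans
      hcost
  exact ((ENNReal.ofReal_pos.2 (Real.rpow_pos_of_pos (sub_pos.2 hhull) s)).trans_le hbound).ne'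

theorem exists_lt_two_add_inv_rpow_le {τ s : ℝ} (hτ : 0 < τ)
    (hs : s < Real.log 2 / Real.log (2 + 1 / τ)) : ∃ t, 0 < t ∧ t < τ ∧ (2 + 1 / t) ^ s ≤ 2 := by
  have hb : 1 < 2 + 1 / τ := by have := one_div_pos.2 hτ; linarith
  have hlt : (2 + 1 / τ) ^ s < 2 :=
    calc (2 + 1 / τ) ^ s < (2 + 1 / τ) ^ Real.logb (2 + 1 / τ) 2 :=
          (Real.rpow_lt_rpow_left_iff hb).2 hs
      _ = 2 := Real.rpow_logb (by linarith) hb.ne' two_pos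
  have hcont : ContinuousAt (fun t : ℝ => (2 + 1 / t) ^ s) τ :=
    (continuousAt_const.add (continuousAt_const.div continuousAt_id hτ.ne')).rpow_const
      (Or.inl (by dsimp; positivity))
  obtain ⟨t, hts, ht⟩ := ((hcont.eventually (gt_mem_nhds hlt)).filter_mono nhdsWithin_le_nhds
    |>.and (Ioo_mem_nhdsLT hτ)).exists
  exact ⟨t, ht.1, ht.2, hts.le⟩

theorem exists_isPresentation_lt_gapRatio {C : Set ℝ} {t : ℝ}
    (h : ENNReal.ofReal t < thickness C) : ∃ U, IsPresentation C U ∧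
      ∀ n, ∀ u ∈ frontier (U n) ∩ C, ENNReal.ofReal t < gapRatio C U n u := by
  obtain ⟨U, hU⟩ := lt_iSup_iff.1 h
  obtain ⟨hpres, hlt⟩ := lt_iSup_iff.1 hU
  exact ⟨U, hpres, fun n u hu => hlt.trans_le (iInf₂_le_of_le n u (iInf_le _ hu))⟩

/-- Lower bound on the Hausdorff dimension of a Cantor set in terms of its thickness. -/
theorem dimH_ge_of_thickness (C : Set ℝ) (hC : IsCantorSet C)
    (h0 : 0 < thickness C) (htop : thickness C ≠ ⊤) :
    ENNReal.ofReal (Real.log 2 / Real.log (2 + 1 / (thickness C).toReal)) ≤ dimH C := by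
  obtain ⟨hne, hcomp, -, -⟩ := hC
  have hτ : 0 < (thickness C).toReal := ENNReal.toReal_pos h0.ne' htop
  refine ENNReal.le_of_forall_nnreal_lt fun r hr => ?_
  obtain rfl | hr0 := eq_or_ne r 0
  · simp
  have hs : (0 : ℝ) < r := NNReal.coe_pos.2 (pos_iff_ne_zero.2 hr0)
  obtain ⟨t, ht, htτ, hst⟩ := exists_lt_two_add_inv_rpow_le hτ
    (ENNReal.coe_lt_ofReal.1 hr)
  obtain ⟨U, hU, hth⟩ := exists_isPresentation_lt_gapRatio
    ((ENNReal.ofReal_lt_iff_lt_toReal ht.le htop).2 htτ)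
  exact le_dimH_of_hausdorffMeasure_ne_zero
    (hausdorffMeasure_ne_zero_of_lt_gapRatio hcomp hne hU ht hth hs hst)
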